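/- Let ω ∈ ℝ, g ≠ 0, κ, γ > 0, d ∈ (−1,1) and suppose C_b = g² d/(κγ) > 1. For any θ ∈ ℝ, define A(t) = (γ√(C_b − 1)/(√2 |g|)) e^{−i(ωt − θ)}, S(t) = (κγ√(C_b − 1)/(√2 g |g|)) e^{−i(ωt − θ)}, and D(t) = γκ/g² for all t ≥ 0. Then (A, S, D) is a (periodic, non-constant when ω ≠ 0) solution of the Maxwell–Bloch equations. -/

import Mathlib

/-!
Along `e^{-i(ωt-θ)}` the Maxwell–Bloch vector field acts on the amplitudes only: for real
amplitudes `A = a e`, `S = σ e` and constant `D = D₀`, the phase factors cancel (`conj e · e = 1`)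
and the system reduces to the three algebraic equations `gσ = κa`, `g a D₀ = γσ` and
`2 g a σ = γ (d - D₀)`. The amplitudes of the theorem solve these exactly because
`a² = γ²(C_b - 1)/(2g²)`. Since `e` changes sign after half a period `π/ω`, the orbit is
periodic, and non-constant as soon as `a ≠ 0`, i.e. `C_b > 1`.
-/

open Complex

def MaxwellBlochAt (ω g κ γ d : ℝ) (A S : ℝ → ℂ) (D : ℝ → ℝ) (t : ℝ) : Prop :=
  HasDerivAt A (-((κ : ℂ) + (ω : ℂ) * I) * A t + (g : ℂ) * S t) t ∧
  HasDerivAt S (-((γ : ℂ) + (ω : ℂ) * I) * S t + (g : ℂ) * A t * (D t : ℂ)) t ∧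
  HasDerivAt D (-4 * g * ((starRingEnd ℂ) (A t) * S t).re - 2 * γ * (D t - d)) t

noncomputable def phasor (ω θ t : ℝ) : ℂ := exp (-I * ((ω * t - θ : ℝ) : ℂ))

theorem hasDerivAt_phasor (ω θ t : ℝ) :
    HasDerivAt (phasor ω θ) (-I * ω * phasor ω θ t) t := by
  have hphase : HasDerivAt (fun t : ℝ => ((ω * t - θ : ℝ) : ℂ)) (ω : ℂ) t := by
    simpa using (((hasDerivAt_id t).const_mul ω).sub_const θ).ofReal_comp
  refine (hphase.const_mul (-I)).cexp.congr_deriv ?_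
  simp only [phasor]
  ring

theorem conj_phasor_mul_self (ω θ t : ℝ) : starRingEnd ℂ (phasor ω θ t) * phasor ω θ t = 1 := by
  rw [phasor, ← exp_conj, ← exp_add]
  simp [conj_ofReal]

theorem antiperiodic_const_mul_phasor {ω : ℝ} (hω : ω ≠ 0) (θ : ℝ) (c : ℂ) :
    Function.Antiperiodic (fun t => c * phasor ω θ t) (Real.pi / ω) := fun t => by
  have hphase : ω * (t + Real.pi / ω) - θ = (ω * t - θ) + Real.pi := by
    field_simp
    ring
  simp only [phasor]
  rw [hphase, ofReal_add, mul_add, exp_add,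
    show -I * (Real.pi : ℂ) = -(Real.pi * I) by ring, exp_neg, exp_pi_mul_I]
  ring

theorem Function.Antiperiodic.exists_nonneg_ne {α R : Type*} [AddCommGroup α] [LinearOrder α]
    [IsOrderedAddMonoid α] [NonAssocRing R] [NoZeroDivisors R] [CharZero R] {f : α → R} {c : α}
    (hf : Function.Antiperiodic f c) (h0 : f 0 ≠ 0) : ∃ t ≥ 0, f t ≠ f 0 := by
  have hne : -f 0 ≠ f 0 := mt CharZero.neg_eq_self_iff.mp h0
  rcases le_total 0 c with hc | hc
  · exact ⟨c, hc, by rwa [hf.eq]⟩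
  · exact ⟨-c, neg_nonneg.mpr hc, by rwa [hf.neg.eq]⟩

theorem maxwellBlochAt_phasor {ω g κ γ d θ a σ D₀ : ℝ} (hA : g * σ = κ * a)
    (hS : g * a * D₀ = γ * σ) (hD : 2 * g * a * σ = γ * (d - D₀)) (t : ℝ) :
    MaxwellBlochAt ω g κ γ d (fun t => a * phasor ω θ t) (fun t => σ * phasor ω θ t)
      (fun _ => D₀) t := by
  have hAc : (g : ℂ) * σ = κ * a := by exact_mod_cast hA
  have hSc : (g : ℂ) * a * D₀ = γ * σ := by exact_mod_cast hS
  have hre : starRingEnd ℂ (a * phasor ω θ t) * (σ * phasor ω θ t) = ((a * σ : ℝ) : ℂ) := by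
    rw [map_mul, conj_ofReal]
    push_cast
    linear_combination (a : ℂ) * σ * conj_phasor_mul_self ω θ t
  refine ⟨?_, ?_, ?_⟩
  · refine ((hasDerivAt_phasor ω θ t).const_mul (a : ℂ)).congr_deriv ?_
    linear_combination (-phasor ω θ t) * hAc
  · refine ((hasDerivAt_phasor ω θ t).const_mul (σ : ℂ)).congr_deriv ?_
    linear_combination (-phasor ω θ t) * hSc
  · refine (hasDerivAt_const t D₀).congr_deriv ?_
    rw [hre, ofReal_re]
    linear_combination 2 * hD

theorem maxwellBlochAt_coherent {ω g κ γ d θ s : ℝ} (hg : g ≠ 0) (hκ : κ ≠ 0) (hγ : γ ≠ 0)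
    (hs : s ^ 2 = g ^ 2 * d / (κ * γ) - 1) (t : ℝ) :
    MaxwellBlochAt ω g κ γ d
      (fun t => ((γ * s / (Real.sqrt 2 * |g|) : ℝ) : ℂ) * phasor ω θ t)
      (fun t => ((κ * γ * s / (Real.sqrt 2 * g * |g|) : ℝ) : ℂ) * phasor ω θ t)
      (fun _ => γ * κ / g ^ 2) t := by
  have hg2 : |g| ^ 2 = g ^ 2 := sq_abs g
  have hsqrt2 : Real.sqrt 2 ^ 2 = 2 := Real.sq_sqrt zero_le_two
  refine maxwellBlochAt_phasor (by field_simp) (by field_simp) ?_ t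
  field_simp
  rw [hsqrt2, hg2, hs]
  field_simp

theorem maxwell_bloch_periodic_solutions
    (ω g κ γ d θ : ℝ) (hg : g ≠ 0) (hκ : 0 < κ) (hγ : 0 < γ)
    (hCb : 1 < g ^ 2 * d / (κ * γ))
    (A S : ℝ → ℂ) (D : ℝ → ℝ)
    (hAdef : ∀ t, A t =
      ((γ * Real.sqrt (g ^ 2 * d / (κ * γ) - 1) / (Real.sqrt 2 * |g|) : ℝ) : ℂ) *
        Complex.exp (-Complex.I * ((ω * t - θ : ℝ) : ℂ)))
    (hSdef : ∀ t, S t =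
      ((κ * γ * Real.sqrt (g ^ 2 * d / (κ * γ) - 1) / (Real.sqrt 2 * g * |g|) : ℝ) : ℂ) *
        Complex.exp (-Complex.I * ((ω * t - θ : ℝ) : ℂ)))
    (hDdef : ∀ t, D t = γ * κ / g ^ 2) :
    (∀ t ≥ (0 : ℝ),
      HasDerivAt A (-((κ : ℂ) + (ω : ℂ) * Complex.I) * A t + (g : ℂ) * S t) t ∧
      HasDerivAt S (-((γ : ℂ) + (ω : ℂ) * Complex.I) * S t + (g : ℂ) * A t * (D t : ℂ)) t ∧
      HasDerivAt D (-4 * g * ((starRingEnd ℂ) (A t) * S t).re - 2 * γ * (D t - d)) t) ∧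
    (ω ≠ 0 →
      Function.Periodic A (2 * Real.pi / ω) ∧ Function.Periodic S (2 * Real.pi / ω) ∧
      ∃ t ≥ (0 : ℝ), A t ≠ A 0) := by
  obtain rfl : A = fun t =>
      ((γ * Real.sqrt (g ^ 2 * d / (κ * γ) - 1) / (Real.sqrt 2 * |g|) : ℝ) : ℂ) * phasor ω θ t :=
    funext hAdef
  obtain rfl : S = fun t =>
      ((κ * γ * Real.sqrt (g ^ 2 * d / (κ * γ) - 1) / (Real.sqrt 2 * g * |g|) : ℝ) : ℂ) *
        phasor ω θ t :=
    funext hSdef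
  obtain rfl : D = fun _ => γ * κ / g ^ 2 := funext hDdef
  have hs := Real.sq_sqrt (sub_nonneg.mpr hCb.le)
  refine ⟨fun t _ => maxwellBlochAt_coherent hg hκ.ne' hγ.ne' hs t, fun hω => ?_⟩
  have ha : 0 < γ * Real.sqrt (g ^ 2 * d / (κ * γ) - 1) / (Real.sqrt 2 * |g|) := by
    have := Real.sqrt_pos.mpr (sub_pos.mpr hCb)
    positivity
  rw [mul_div_assoc 2 Real.pi ω]
  refine ⟨(antiperiodic_const_mul_phasor hω θ _).periodic_two_mul,
    (antiperiodic_const_mul_phasor hω θ _).periodic_two_mul, ?_⟩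
  exact (antiperiodic_const_mul_phasor hω θ _).exists_nonneg_ne
    (mul_ne_zero (ofReal_ne_zero.mpr ha.ne') (exp_ne_zero _))
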